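/- arXiv:math/0610403 — 3 statements merged into one kernel-verified Lean document; each statement's English description precedes it below -/
import Mathlib

section
/- Let f be a non-zero homogeneous discrete invariant whose degree is not divisible by the characteristic of K. Then [U, ∂f] = (deg f)·f ≠ 0; the submodule M_f of the module M of discrete covariants generated by U and ∂f over the ring R = K[a,b]^{Γ_n} of discrete invariants is free of rank 2 (U and ∂f are R-linearly independent); and f·M ⊆ M_f ⊆ M. In particular, for every discrete covariant p one has the identity (deg f)·f·p = −[∂f, p]·U + [U, p]·∂f. -/
open MvPolynomial Matrix

noncomputable section

/-- Substitution action: `(act γ f)(v) = f (γ • v)`. -/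
def act {K : Type*} [Field K] {m : ℕ} (γ : Matrix (Fin m) (Fin m) K)
    (f : MvPolynomial (Fin m) K) : MvPolynomial (Fin m) K :=
  MvPolynomial.aeval (fun i => ∑ j, MvPolynomial.C (γ i j) * MvPolynomial.X j) f

/-- The Klein polynomial `D`. -/
def Dpoly (K : Type*) [Field K] (n : ℕ) : MvPolynomial (Fin 2) K :=
  if n = 2 then X 0 * (64 * X 0 ^ 2 - X 1 ^ 2)
  else if n = 3 then -(X 0 * (27 * X 0 ^ 3 + X 1 ^ 3))
  else if n = 4 then X 0 * X 1 * (16 * X 0 ^ 4 - X 1 ^ 4)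
  else X 0 * X 1 * (X 0 ^ 10 - 11 * X 0 ^ 5 * X 1 ^ 5 - X 1 ^ 10)

/-- The discrete invariant `c4`. -/
def c4p (K : Type*) [Field K] (n : ℕ) : MvPolynomial (Fin 2) K :=
  C (-1 / (((12 / (6 - n) : ℕ) : K) - 1) ^ 2) *
    (pderiv 0 (pderiv 0 (Dpoly K n)) * pderiv 1 (pderiv 1 (Dpoly K n)) -
      pderiv 0 (pderiv 1 (Dpoly K n)) ^ 2)

/-- The discrete invariant `c6`. -/
def c6p (K : Type*) [Field K] (n : ℕ) : MvPolynomial (Fin 2) K :=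
  C (1 / ((4 * n / (6 - n) : ℕ) : K)) *
    (pderiv 0 (Dpoly K n) * pderiv 1 (c4p K n) - pderiv 1 (Dpoly K n) * pderiv 0 (c4p K n))

def gen1 (K : Type*) [Field K] (ζ : K) (n : ℕ) : Matrix (Fin 2) (Fin 2) K :=
  if n = 2 then !![1, 1/8; 24, -1]
  else if n = 3 then !![1, 1/3; 6, -1]
  else if n = 4 then !![1, 1/2; 2, -1]
  else !![1 + ζ + ζ ^ 4, 1; 1, -(1 + ζ + ζ ^ 4)]

def gen2 (K : Type*) [Field K] (ζ : K) (n : ℕ) : Matrix (Fin 2) (Fin 2) K :=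
  if n = 2 then !![1, 0; 0, -1] else !![1, 0; 0, ζ]

/-- The inverse image in `GL₂` of the subgroup `Δₙ ⊆ PGL₂` generated by the images of
`gen1` and `gen2`; equivalently the subgroup of `GL₂` generated by these two matrices
together with the scalar matrices (the centre). -/
def DeltaLift (K : Type*) [Field K] (ζ : K) (n : ℕ) :
    Subgroup (Matrix.GeneralLinearGroup (Fin 2) K) :=
  Subgroup.closure
    ({g | (g : Matrix (Fin 2) (Fin 2) K) = gen1 K ζ n ∨
        (g : Matrix (Fin 2) (Fin 2) K) = gen2 K ζ n} ∪
      (Subgroup.center (Matrix.GeneralLinearGroup (Fin 2) K) : Set _))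

/-- `Γ̃ₙ`, the preimage of `Δₙ` in `SL₂(K)`. -/
def GammaTilde (K : Type*) [Field K] (ζ : K) (n : ℕ) :
    Subgroup (Matrix.SpecialLinearGroup (Fin 2) K) :=
  Subgroup.comap Matrix.SpecialLinearGroup.toGL (DeltaLift K ζ n)

/-- `Γₙ`, the commutator subgroup of `Γ̃ₙ`. -/
def Gamma (K : Type*) [Field K] (ζ : K) (n : ℕ) :
    Subgroup (Matrix.SpecialLinearGroup (Fin 2) K) :=
  ⁅GammaTilde K ζ n, GammaTilde K ζ n⁆

/-- A discrete invariant. -/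
def IsDiscreteInvariant (K : Type*) [Field K] (ζ : K) (n : ℕ)
    (f : MvPolynomial (Fin 2) K) : Prop :=
  ∀ γ ∈ Gamma K ζ n, act (γ : Matrix (Fin 2) (Fin 2) K) f = f

/-- The identity covariant `U = (a, b)`. -/
def Upair (K : Type*) [Field K] : MvPolynomial (Fin 2) K × MvPolynomial (Fin 2) K :=
  (X 0, X 1)

/-- `∂f = (−∂f/∂b, ∂f/∂a)`. -/
def dpair {K : Type*} [Field K] (f : MvPolynomial (Fin 2) K) :
    MvPolynomial (Fin 2) K × MvPolynomial (Fin 2) K :=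
  (-(pderiv 1 f), pderiv 0 f)

/-- A matrix applied to a column vector of polynomials. -/
def matMul {K : Type*} [Field K] (γ : Matrix (Fin 2) (Fin 2) K)
    (p : MvPolynomial (Fin 2) K × MvPolynomial (Fin 2) K) :
    MvPolynomial (Fin 2) K × MvPolynomial (Fin 2) K :=
  (C (γ 0 0) * p.1 + C (γ 0 1) * p.2, C (γ 1 0) * p.1 + C (γ 1 1) * p.2)

/-- A discrete covariant: `p ∘ γ = γ ∘ p` for all `γ ∈ Γₙ`. -/
def IsDiscreteCovariant (K : Type*) [Field K] (ζ : K) (n : ℕ)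
    (p : MvPolynomial (Fin 2) K × MvPolynomial (Fin 2) K) : Prop :=
  ∀ γ ∈ Gamma K ζ n,
    (act (γ : Matrix (Fin 2) (Fin 2) K) p.1, act (γ : Matrix (Fin 2) (Fin 2) K) p.2) =
      matMul (γ : Matrix (Fin 2) (Fin 2) K) p

/-- The alternating form `[p, q] = p₁q₂ − p₂q₁`. -/
def brkt {K : Type*} [Field K]
    (p q : MvPolynomial (Fin 2) K × MvPolynomial (Fin 2) K) : MvPolynomial (Fin 2) K :=
  p.1 * q.2 - p.2 * q.1

/-! By the chain rule, `f ∘ γ = f` makes `∂f` transform like `U`, and since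
`[γ p, γ q] = det γ · [p, q]` the bracket of two covariants is an invariant. Euler's identity gives
`[U, ∂f] = (deg f)·f`, and Cramer's rule `[u, v]·p = −[v, p]·u + [u, p]·v` then writes
`(deg f)·f·p` in terms of `U` and `∂f` with invariant coefficients; bracketing
`r·U + s·∂f = 0` with `∂f` and with `U` gives `r·[U, ∂f] = s·[U, ∂f] = 0`. -/

namespace MvPolynomial

theorem pderiv_aeval {R σ τ : Type*} [CommSemiring R] [Fintype σ]
    (g : σ → MvPolynomial τ R) (f : MvPolynomial σ R) (j : τ) :
    pderiv j (aeval g f) = ∑ i, pderiv j (g i) * aeval g (pderiv i f) := by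
  classical
  induction f using MvPolynomial.induction_on with
  | C a => simp
  | add p q hp hq => simp only [map_add, hp, hq, mul_add, Finset.sum_add_distrib]
  | mul_X p i hp =>
    simp only [map_mul, map_add, aeval_X, pderiv_mul, hp, pderiv_X, mul_add,
      Finset.sum_add_distrib, Finset.sum_mul, mul_assoc, Pi.single_apply, mul_ite, mul_one,
      mul_zero, apply_ite (aeval g), map_zero, Finset.sum_ite_eq, Finset.mem_univ, if_true]
    ring

end MvPolynomial

section Action

variable {K : Type*} [Field K] {m : ℕ}

theorem act_neg (γ : Matrix (Fin m) (Fin m) K) (f : MvPolynomial (Fin m) K) :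
    act γ (-f) = -act γ f :=
  map_neg _ f

theorem act_smul (γ : Matrix (Fin m) (Fin m) K) (c : K) (f : MvPolynomial (Fin m) K) :
    act γ (c • f) = c • act γ f :=
  map_smul _ c f

theorem pderiv_act (γ : Matrix (Fin m) (Fin m) K) (f : MvPolynomial (Fin m) K)
    (j : Fin m) : pderiv j (act γ f) = ∑ i, C (γ i j) * act γ (pderiv i f) := by
  classical
  unfold act
  rw [pderiv_aeval]
  simp [pderiv_X, Pi.single_apply]

theorem act_X_pair (γ : Matrix (Fin 2) (Fin 2) K) :
    (act γ (Upair K).1, act γ (Upair K).2) = matMul γ (Upair K) := by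
  simp [act, Upair, matMul, Fin.sum_univ_two]

theorem act_brkt (γ : Matrix (Fin 2) (Fin 2) K)
    (p q : MvPolynomial (Fin 2) K × MvPolynomial (Fin 2) K) :
    act γ (brkt p q) = brkt (act γ p.1, act γ p.2) (act γ q.1, act γ q.2) := by
  simp only [act, brkt, map_sub, map_mul]

theorem brkt_matMul (γ : Matrix (Fin 2) (Fin 2) K)
    (p q : MvPolynomial (Fin 2) K × MvPolynomial (Fin 2) K) :
    brkt (matMul γ p) (matMul γ q) = C γ.det * brkt p q := by
  simp only [brkt, matMul, det_fin_two, map_sub, map_mul]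
  ring

theorem C_det_fin_two_eq_one (γ : Matrix.SpecialLinearGroup (Fin 2) K) :
    C ((γ : Matrix (Fin 2) (Fin 2) K) 0 0) * C ((γ : Matrix (Fin 2) (Fin 2) K) 1 1)
      - C ((γ : Matrix (Fin 2) (Fin 2) K) 0 1) * C ((γ : Matrix (Fin 2) (Fin 2) K) 1 0)
      = (1 : MvPolynomial (Fin 2) K) := by
  rw [← map_mul, ← map_mul, ← map_sub, ← det_fin_two, γ.det_coe, map_one]

theorem act_dpair_of_act_eq (γ : Matrix.SpecialLinearGroup (Fin 2) K)
    {f : MvPolynomial (Fin 2) K} (hf : act (γ : Matrix (Fin 2) (Fin 2) K) f = f) :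
    (act (γ : Matrix (Fin 2) (Fin 2) K) (dpair f).1,
        act (γ : Matrix (Fin 2) (Fin 2) K) (dpair f).2) =
      matMul (γ : Matrix (Fin 2) (Fin 2) K) (dpair f) := by
  set g := (γ : Matrix (Fin 2) (Fin 2) K)
  have hdet := C_det_fin_two_eq_one γ
  have e0 := pderiv_act g f 0
  have e1 := pderiv_act g f 1
  rw [hf, Fin.sum_univ_two] at e0 e1
  simp only [dpair, matMul, act_neg, Prod.mk.injEq]
  constructor
  · linear_combination (-C (g 0 1)) * e0 + C (g 0 0) * e1 + act g (pderiv 1 f) * hdet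
  · linear_combination (-C (g 1 1)) * e0 + C (g 1 0) * e1 - act g (pderiv 0 f) * hdet

end Action

section Bracket

variable {K : Type*} [Field K]

theorem brkt_self (u : MvPolynomial (Fin 2) K × MvPolynomial (Fin 2) K) : brkt u u = 0 := by
  simp only [brkt]
  ring

theorem brkt_smul_add_smul_left (r s : MvPolynomial (Fin 2) K)
    (u v w : MvPolynomial (Fin 2) K × MvPolynomial (Fin 2) K) :
    brkt (r • u + s • v) w = r * brkt u w + s * brkt v w := by
  simp only [brkt, Prod.fst_add, Prod.snd_add, Prod.smul_fst, Prod.smul_snd, smul_eq_mul]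
  ring

theorem brkt_smul_eq (u v p : MvPolynomial (Fin 2) K × MvPolynomial (Fin 2) K) :
    brkt u v • p = (-brkt v p) • u + brkt u p • v := by
  refine Prod.ext ?_ ?_ <;>
    simp only [brkt, Prod.fst_add, Prod.snd_add, Prod.smul_fst, Prod.smul_snd, smul_eq_mul] <;>
    ring

theorem eq_zero_of_smul_add_smul_eq_zero
    {u v : MvPolynomial (Fin 2) K × MvPolynomial (Fin 2) K} (huv : brkt u v ≠ 0)
    {r s : MvPolynomial (Fin 2) K} (h : r • u + s • v = 0) :
    r = 0 ∧ s = 0 := by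
  have hv := brkt_smul_add_smul_left r s u v v
  have hu := brkt_smul_add_smul_left r s u v u
  rw [h, brkt_self] at hv hu
  refine ⟨(mul_eq_zero.1 ?_).resolve_right huv, (mul_eq_zero.1 ?_).resolve_right huv⟩ <;>
    simp only [brkt, Prod.fst_zero, Prod.snd_zero, zero_mul, sub_zero] at hv hu ⊢
  · linear_combination -hv
  · linear_combination hu

theorem brkt_upair_dpair {f : MvPolynomial (Fin 2) K} {d : ℕ} (hf : f.IsHomogeneous d) :
    brkt (Upair K) (dpair f) = (d : K) • f := by
  rw [Nat.cast_smul_eq_nsmul, ← hf.sum_X_mul_pderiv, Fin.sum_univ_two]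
  simp only [brkt, Upair, dpair]
  ring

end Bracket

section DiscreteCovariants

variable {K : Type*} [Field K] {ζ : K} {n : ℕ}

theorem isDiscreteCovariant_upair : IsDiscreteCovariant K ζ n (Upair K) :=
  fun _ _ => act_X_pair _

theorem IsDiscreteInvariant.smul {r : MvPolynomial (Fin 2) K}
    (hr : IsDiscreteInvariant K ζ n r) (c : K) : IsDiscreteInvariant K ζ n (c • r) :=
  fun γ hγ => by rw [act_smul, hr γ hγ]

theorem IsDiscreteInvariant.isDiscreteCovariant_dpair {f : MvPolynomial (Fin 2) K}
    (hf : IsDiscreteInvariant K ζ n f) : IsDiscreteCovariant K ζ n (dpair f) :=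
  fun γ hγ => act_dpair_of_act_eq γ (hf γ hγ)

theorem IsDiscreteCovariant.isDiscreteInvariant_brkt
    {p q : MvPolynomial (Fin 2) K × MvPolynomial (Fin 2) K}
    (hp : IsDiscreteCovariant K ζ n p) (hq : IsDiscreteCovariant K ζ n q) :
    IsDiscreteInvariant K ζ n (brkt p q) :=
  fun γ hγ => by rw [act_brkt, hp γ hγ, hq γ hγ, brkt_matMul, γ.det_coe, map_one, one_mul]

end DiscreteCovariants

theorem free_submodule_Mf_general (K : Type*) [Field K] (n : ℕ)
    (ζ : K)
    (f : MvPolynomial (Fin 2) K) (d : ℕ) (hf0 : f ≠ 0) (hfhom : f.IsHomogeneous d)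
    (hfinv : IsDiscreteInvariant K ζ n f)
    (hd : (d : K) ≠ 0) :
    brkt (Upair K) (dpair f) = (d : K) • f ∧
    (d : K) • f ≠ 0 ∧
    IsDiscreteCovariant K ζ n (Upair K) ∧
    IsDiscreteCovariant K ζ n (dpair f) ∧
    (∀ r s : MvPolynomial (Fin 2) K,
      IsDiscreteInvariant K ζ n r → IsDiscreteInvariant K ζ n s →
        r • Upair K + s • dpair f = 0 → r = 0 ∧ s = 0) ∧
    (∀ p : MvPolynomial (Fin 2) K × MvPolynomial (Fin 2) K,
      IsDiscreteCovariant K ζ n p →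
        ∃ r s : MvPolynomial (Fin 2) K,
          IsDiscreteInvariant K ζ n r ∧ IsDiscreteInvariant K ζ n s ∧
            f • p = r • Upair K + s • dpair f) ∧
    (∀ p : MvPolynomial (Fin 2) K × MvPolynomial (Fin 2) K,
      IsDiscreteCovariant K ζ n p →
        ((d : K) • (f • p) =
          (-(brkt (dpair f) p)) • Upair K + (brkt (Upair K) p) • dpair f)) := by
  have hbrkt := brkt_upair_dpair hfhom
  have hne : (d : K) • f ≠ 0 := smul_ne_zero hd hf0
  have hdcov := hfinv.isDiscreteCovariant_dpair
  have hcramer (p : MvPolynomial (Fin 2) K × MvPolynomial (Fin 2) K) :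
      (d : K) • (f • p) =
        (-(brkt (dpair f) p)) • Upair K + (brkt (Upair K) p) • dpair f := by
    rw [← smul_assoc, ← hbrkt, brkt_smul_eq]
  refine ⟨hbrkt, hne, isDiscreteCovariant_upair, hdcov,
    fun r s _ _ h => eq_zero_of_smul_add_smul_eq_zero (hbrkt ▸ hne) h,
    fun p hp => ⟨-(d : K)⁻¹ • brkt (dpair f) p, (d : K)⁻¹ • brkt (Upair K) p,
      (hdcov.isDiscreteInvariant_brkt hp).smul _,
      (isDiscreteCovariant_upair.isDiscreteInvariant_brkt hp).smul _, ?_⟩,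
    fun p _ => hcramer p⟩
  rw [← inv_smul_smul₀ hd (f • p), hcramer]
  simp only [smul_add, smul_assoc, neg_smul, smul_neg]

/-- For a non-zero homogeneous discrete invariant `f` of degree prime to the characteristic:
`[U,∂f] = (deg f)·f ≠ 0`; `U` and `∂f` are discrete covariants generating a free rank-2
module `M_f` over the ring of discrete invariants with `f·M ⊆ M_f ⊆ M`; and
`(deg f)·f·p = −[∂f,p]·U + [U,p]·∂f` for every discrete covariant `p`. -/
theorem free_submodule_Mf (K : Type*) [Field K] (n : ℕ)
    (hn : n ∈ ({2, 3, 4, 5} : Set ℕ))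
    (hchar : ∀ p : ℕ, p.Prime → CharP K p → ¬ p ∣ 6 * n)
    (ζ : K) (hζ : IsPrimitiveRoot ζ n)
    (f : MvPolynomial (Fin 2) K) (d : ℕ) (hf0 : f ≠ 0) (hfhom : f.IsHomogeneous d)
    (hfinv : IsDiscreteInvariant K ζ n f)
    (hd : (d : K) ≠ 0) :
    brkt (Upair K) (dpair f) = (d : K) • f ∧
    (d : K) • f ≠ 0 ∧
    IsDiscreteCovariant K ζ n (Upair K) ∧
    IsDiscreteCovariant K ζ n (dpair f) ∧
    (∀ r s : MvPolynomial (Fin 2) K,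
      IsDiscreteInvariant K ζ n r → IsDiscreteInvariant K ζ n s →
        r • Upair K + s • dpair f = 0 → r = 0 ∧ s = 0) ∧
    (∀ p : MvPolynomial (Fin 2) K × MvPolynomial (Fin 2) K,
      IsDiscreteCovariant K ζ n p →
        ∃ r s : MvPolynomial (Fin 2) K,
          IsDiscreteInvariant K ζ n r ∧ IsDiscreteInvariant K ζ n s ∧
            f • p = r • Upair K + s • dpair f) ∧
    (∀ p : MvPolynomial (Fin 2) K × MvPolynomial (Fin 2) K,
      IsDiscreteCovariant K ζ n p →
        ((d : K) • (f • p) =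
          (-(brkt (dpair f) p)) • Upair K + (brkt (Upair K) p) • dpair f)) :=
  free_submodule_Mf_general K n ζ f d hf0 hfhom hfinv hd
end
end

section
/- In K[a,b] there are the identities [∂D, ∂c4] = (deg c4)·c6 and [∂D, ∂c6] = (deg c6)·c4²; explicitly, ∂D/∂a·∂c4/∂b − ∂D/∂b·∂c4/∂a = (4n/(6−n))·c6 and ∂D/∂a·∂c6/∂b − ∂D/∂b·∂c6/∂a = (6n/(6−n))·c4². -/
open MvPolynomial Matrix

noncomputable section

@[simp] lemma pderiv_ofNat_aux {K : Type*} [Field K] (i : Fin 2) (n : ℕ) [n.AtLeastTwo] :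
    pderiv i (no_index (OfNat.ofNat n) : MvPolynomial (Fin 2) K) = 0 := by
  rw [← map_ofNat (C : K →+* MvPolynomial (Fin 2) K) n, pderiv_C]

lemma C_cancel {K : Type*} [Field K] (c a : K) (h : c * a = 1)
    (E R : MvPolynomial (Fin 2) K) (hE : E = C a * R) : C c * E = R := by
  rw [hE, ← mul_assoc, ← C_mul, h, C_1, one_mul]

set_option maxHeartbeats 4000000 in
/-- The evectant identities `[∂D, ∂c4] = (deg c4)·c6` and `[∂D, ∂c6] = (deg c6)·c4²`. -/
theorem evectant_bracket_identities (K : Type*) [Field K] (n : ℕ)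
    (hn : n ∈ ({2, 3, 4, 5} : Set ℕ))
    (hchar : ∀ p : ℕ, p.Prime → CharP K p → ¬ p ∣ 6 * n)
    (ζ : K) (hζ : IsPrimitiveRoot ζ n) :
    pderiv 0 (Dpoly K n) * pderiv 1 (c4p K n) -
        pderiv 1 (Dpoly K n) * pderiv 0 (c4p K n) =
      C ((4 * n / (6 - n) : ℕ) : K) * c6p K n ∧
    pderiv 0 (Dpoly K n) * pderiv 1 (c6p K n) -
        pderiv 1 (Dpoly K n) * pderiv 0 (c6p K n) =
      C ((6 * n / (6 - n) : ℕ) : K) * (c4p K n) ^ 2 := by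
  have hq : ∀ q : ℕ, q.Prime → q ∣ 6 * n → (q : K) ≠ 0 := by
    intro q hqp hdvd h0
    exact hchar q hqp ((CharP.charP_iff_prime_eq_zero hqp).2 h0) hdvd
  simp only [Set.mem_insert_iff, Set.mem_singleton_iff] at hn
  rcases hn with rfl | rfl | rfl | rfl
  · -- n = 2
    have h2 : (2:K) ≠ 0 := hq 2 Nat.prime_two (by norm_num)
    have h4 : (4:K) ≠ 0 := by have h := mul_ne_zero h2 h2; norm_num at h; exact h
    have hc4 : c4p K 2 = 192 * X 0 ^ 2 + X 1 ^ 2 := by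
      rw [c4p, show (-1 / (((12/(6-2):ℕ):K) - 1)^2) = -1/4 by norm_num]
      apply C_cancel _ (-4) (by field_simp)
      simp [Dpoly, pderiv_mul, pderiv_X, map_neg, map_ofNat]
      ring
    have hc6 : c6p K 2 = 576 * X 0 ^ 2 * X 1 - X 1 ^ 3 := by
      rw [c6p, show (((4*2/(6-2):ℕ)):K) = 2 by norm_num, hc4]
      apply C_cancel _ 2 (by field_simp)
      simp [Dpoly, pderiv_mul, pderiv_X, map_neg, map_ofNat]
      ring
    rw [hc4, hc6, show (((4*2/(6-2):ℕ)):K) = 2 by norm_num,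
        show (((6*2/(6-2):ℕ)):K) = 3 by norm_num]
    constructor <;>
    · simp [Dpoly, pderiv_mul, pderiv_X, map_neg, map_ofNat]
      ring
  · -- n = 3
    have h2 : (2:K) ≠ 0 := hq 2 Nat.prime_two (by norm_num)
    have h3 : (3:K) ≠ 0 := hq 3 Nat.prime_three (by norm_num)
    have h4 : (4:K) ≠ 0 := by have h := mul_ne_zero h2 h2; norm_num at h; exact h
    have h9 : (9:K) ≠ 0 := by have h := mul_ne_zero h3 h3; norm_num at h; exact h
    have hc4 : c4p K 3 = X 1 ^ 4 - 216 * X 0 ^ 3 * X 1 := by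
      rw [c4p, show (-1 / (((12/(6-3):ℕ):K) - 1)^2) = -1/9 by norm_num]
      apply C_cancel _ (-9) (by field_simp)
      simp [Dpoly, pderiv_mul, pderiv_X, map_neg, map_ofNat]
      ring
    have hc6 : c6p K 3 = 5832 * X 0 ^ 6 - 540 * X 0 ^ 3 * X 1 ^ 3 - X 1 ^ 6 := by
      rw [c6p, show (((4*3/(6-3):ℕ)):K) = 4 by norm_num, hc4]
      apply C_cancel _ 4 (by field_simp)
      simp [Dpoly, pderiv_mul, pderiv_X, map_neg, map_ofNat]
      ring
    rw [hc4, hc6, show (((4*3/(6-3):ℕ)):K) = 4 by norm_num,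
        show (((6*3/(6-3):ℕ)):K) = 6 by norm_num]
    constructor <;>
    · simp [Dpoly, pderiv_mul, pderiv_X, map_neg, map_ofNat]
      ring
  · -- n = 4
    by_cases hp0 : (5:K) = 0
    · have hc4z : c4p K 4 = 0 := by
        rw [c4p, show (((12/(6-4):ℕ):K)) = 6 by norm_num, (by norm_num : ((6:K)-1) = 5), hp0]
        simp
      have hc6z : c6p K 4 = 0 := by rw [c6p, hc4z]; simp
      rw [hc4z, hc6z]
      constructor <;> simp
    · have hp : (5:K) ≠ 0 := hp0
      have h2 : (2:K) ≠ 0 := hq 2 Nat.prime_two (by norm_num)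
      have h8 : (8:K) ≠ 0 := by have h := mul_ne_zero (mul_ne_zero h2 h2) h2; norm_num at h; exact h
      have h25 : (25:K) ≠ 0 := by have h := mul_ne_zero hp hp; norm_num at h; exact h
      have hc4 : c4p K 4 = 256 * X 0 ^ 8 + 224 * X 0 ^ 4 * X 1 ^ 4 + X 1 ^ 8 := by
        rw [c4p, show (-1 / (((12/(6-4):ℕ):K) - 1)^2) = -1/25 by norm_num]
        apply C_cancel _ (-25) (by field_simp)
        simp [Dpoly, pderiv_mul, pderiv_X, map_neg, map_ofNat]
        ring
      have hc6 : c6p K 4 = -4096 * X 0 ^ 12 + 8448 * X 0 ^ 8 * X 1 ^ 4 + 528 * X 0 ^ 4 * X 1 ^ 8 - X 1 ^ 12 := by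
        rw [c6p, show (((4*4/(6-4):ℕ)):K) = 8 by norm_num, hc4]
        apply C_cancel _ 8 (by field_simp)
        simp [Dpoly, pderiv_mul, pderiv_X, map_neg, map_ofNat]
        ring
      rw [hc4, hc6, show (((4*4/(6-4):ℕ)):K) = 8 by norm_num,
          show (((6*4/(6-4):ℕ)):K) = 12 by norm_num]
      constructor <;>
      · simp [Dpoly, pderiv_mul, pderiv_X, map_neg, map_ofNat]
        ring
  · -- n = 5
    by_cases hp0 : (11:K) = 0
    · have hc4z : c4p K 5 = 0 := by
        rw [c4p, show (((12/(6-5):ℕ):K)) = 12 by norm_num, (by norm_num : ((12:K)-1) = 11), hp0]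
        simp
      have hc6z : c6p K 5 = 0 := by rw [c6p, hc4z]; simp
      rw [hc4z, hc6z]
      constructor <;> simp
    · have hp : (11:K) ≠ 0 := hp0
      have h2 : (2:K) ≠ 0 := hq 2 Nat.prime_two (by norm_num)
      have h5 : (5:K) ≠ 0 := hq 5 (by norm_num) (by norm_num)
      have h20 : (20:K) ≠ 0 := by have h := mul_ne_zero (mul_ne_zero h2 h2) h5; norm_num at h; exact h
      have h121 : (121:K) ≠ 0 := by have h := mul_ne_zero hp hp; norm_num at h; exact h
      have hc4 : c4p K 5 = X 0 ^ 20 + 228 * X 0 ^ 15 * X 1 ^ 5 + 494 * X 0 ^ 10 * X 1 ^ 10 - 228 * X 0 ^ 5 * X 1 ^ 15 + X 1 ^ 20 := by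
        rw [c4p, show (-1 / (((12/(6-5):ℕ):K) - 1)^2) = -1/121 by norm_num]
        apply C_cancel _ (-121) (by field_simp)
        simp [Dpoly, pderiv_mul, pderiv_X, map_neg, map_ofNat]
        ring
      have hc6 : c6p K 5 = -X 0 ^ 30 + 522 * X 0 ^ 25 * X 1 ^ 5 + 10005 * X 0 ^ 20 * X 1 ^ 10 + 10005 * X 0 ^ 10 * X 1 ^ 20 - 522 * X 0 ^ 5 * X 1 ^ 25 - X 1 ^ 30 := by
        rw [c6p, show (((4*5/(6-5):ℕ)):K) = 20 by norm_num, hc4]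
        apply C_cancel _ 20 (by field_simp)
        simp [Dpoly, pderiv_mul, pderiv_X, map_neg, map_ofNat]
        ring
      rw [hc4, hc6, show (((4*5/(6-5):ℕ)):K) = 20 by norm_num,
          show (((6*5/(6-5):ℕ)):K) = 30 by norm_num]
      constructor <;>
      · simp [Dpoly, pderiv_mul, pderiv_X, map_neg, map_ofNat]
        ring

end
end

section
/- Let K be a field of characteristic not 2 or 3 containing a primitive cube root of unity ζ₃, and let H₃ ≤ SL₃(K) be the subgroup generated by the diagonal matrix diag(1, ζ₃, ζ₃²) and the cyclic permutation matrix sending the standard basis vectors e₁ ↦ e₂ ↦ e₃ ↦ e₁. Then the ternary cubics F ∈ K[x,y,z] satisfying F∘g = F for all g ∈ H₃ (where (F∘g)(v) = F(g·v) for column vectors v = (x,y,z)ᵀ) form exactly the 2-dimensional K-vector space spanned by x³ + y³ + z³ and xyz. -/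
open MvPolynomial Matrix

noncomputable section

section HeisAux

variable {K : Type*} [Field K]

lemma act_one (f : MvPolynomial (Fin 3) K) : act (1 : Matrix (Fin 3) (Fin 3) K) f = f := by
  have h : (fun i => ∑ j, C ((1 : Matrix (Fin 3) (Fin 3) K) i j) * X j)
      = (X : Fin 3 → MvPolynomial (Fin 3) K) := by
    funext i
    fin_cases i <;> simp [Fin.sum_univ_three, Matrix.one_apply]
  rw [act, h, aeval_X_left_apply]

lemma act_act (A B : Matrix (Fin 3) (Fin 3) K) (f : MvPolynomial (Fin 3) K) :
    act B (act A f) = act (A * B) f := by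
  rw [act, act, act, ← AlgHom.comp_apply, comp_aeval]
  have hs : (fun i => (aeval (fun i => ∑ j, C (B i j) * X j))
        ((fun i => ∑ j, C (A i j) * X j) i))
      = fun i => ∑ j, C ((A * B) i j) * (X j : MvPolynomial (Fin 3) K) := by
    funext i
    simp only [map_sum, _root_.map_mul, aeval_C, aeval_X, algebraMap_eq, Matrix.mul_apply,
      Fin.sum_univ_three, map_add]
    ring
  rw [hs]

lemma aeval_scale_monomial (d : Fin 3 → K) (m : Fin 3 →₀ ℕ) (c : K) :
    aeval (fun i => C (d i) * X i) (monomial m c)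
      = monomial m (c * ∏ i, d i ^ m i) := by
  rw [aeval_monomial, monomial_eq]
  have hsup : (∏ i ∈ m.support, d i ^ m i) = ∏ i, d i ^ m i :=
    Finset.prod_subset (Finset.subset_univ _)
      (fun i _ hi => by simp [Finsupp.notMem_support_iff.mp hi])
  rw [Finsupp.prod, Finsupp.prod]
  simp only [mul_pow]
  rw [Finset.prod_mul_distrib]
  simp only [← map_pow]
  rw [← map_prod (C : K →+* MvPolynomial (Fin 3) K)]
  rw [hsup, algebraMap_eq, _root_.map_mul C c]
  ring

lemma coeff_scale (d : Fin 3 → K) (F : MvPolynomial (Fin 3) K) (m : Fin 3 →₀ ℕ) :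
    coeff m (aeval (fun i => C (d i) * X i) F) = (∏ i, d i ^ m i) * coeff m F := by
  conv_lhs => rw [F.as_sum]
  rw [map_sum, coeff_sum]
  simp only [aeval_scale_monomial, coeff_monomial]
  rw [Finset.sum_ite_eq' F.support m (fun v => coeff v F * ∏ i, d i ^ v i)]
  by_cases h : m ∈ F.support
  · rw [if_pos h]; ring
  · rw [if_neg h, MvPolynomial.notMem_support_iff.mp h, mul_zero]

def M (p q r : ℕ) : Fin 3 →₀ ℕ :=
  Finsupp.single 0 p + Finsupp.single 1 q + Finsupp.single 2 r

lemma M_apply0 (p q r : ℕ) : M p q r 0 = p := by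
  simp [M, Finsupp.single_apply]

lemma M_apply1 (p q r : ℕ) : M p q r 1 = q := by
  simp [M, Finsupp.single_apply]

lemma M_apply2 (p q r : ℕ) : M p q r 2 = r := by
  simp [M, Finsupp.single_apply]

lemma M_eq_iff (p q r p' q' r' : ℕ) :
    M p q r = M p' q' r' ↔ p = p' ∧ q = q' ∧ r = r' := by
  constructor
  · intro h
    refine ⟨?_, ?_, ?_⟩
    · have := DFunLike.congr_fun h 0; simpa [M_apply0] using this
    · have := DFunLike.congr_fun h 1; simpa [M_apply1] using this
    · have := DFunLike.congr_fun h 2; simpa [M_apply2] using this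
  · rintro ⟨rfl, rfl, rfl⟩; rfl

lemma eq_M (m : Fin 3 →₀ ℕ) : m = M (m 0) (m 1) (m 2) := by
  ext i
  fin_cases i <;> simp [M, Finsupp.single_apply]

lemma degree3 (m : Fin 3 →₀ ℕ) : m.degree = m 0 + m 1 + m 2 := by
  rw [Finsupp.degree_apply, Finset.sum_subset (Finset.subset_univ _)
    (fun i _ h => Finsupp.notMem_support_iff.mp h), Fin.sum_univ_three]

lemma mapDomain_M (p q r : ℕ) :
    Finsupp.mapDomain (![2, 0, 1] : Fin 3 → Fin 3) (M p q r) = M q r p := by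
  simp only [M, Finsupp.mapDomain_add, Finsupp.mapDomain_single]
  simp only [Matrix.cons_val_zero, Matrix.cons_val_one, Matrix.head_cons,
    Matrix.cons_val_two, Matrix.tail_cons]
  abel

lemma single03 : (Finsupp.single 0 3 : Fin 3 →₀ ℕ) = M 3 0 0 := by simp [M]
lemma single13 : (Finsupp.single 1 3 : Fin 3 →₀ ℕ) = M 0 3 0 := by simp [M]
lemma single23 : (Finsupp.single 2 3 : Fin 3 →₀ ℕ) = M 0 0 3 := by simp [M]

lemma xyz_eq : (X 0 * X 1 * X 2 : MvPolynomial (Fin 3) K) = monomial (M 1 1 1) 1 := by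
  rw [M, X, X, X, monomial_mul, monomial_mul]
  simp

end HeisAux

/-- The standard Heisenberg group of degree 3: the subgroup of `SL₃(K)` generated by
`diag(1, ζ, ζ²)` and the cyclic permutation matrix `e₁ ↦ e₂ ↦ e₃ ↦ e₁`. -/
def Heis3 (K : Type*) [Field K] (ζ : K) : Subgroup (Matrix.SpecialLinearGroup (Fin 3) K) :=
  Subgroup.closure
    {g : Matrix.SpecialLinearGroup (Fin 3) K |
      (g : Matrix (Fin 3) (Fin 3) K) = !![1, 0, 0; 0, ζ, 0; 0, 0, ζ ^ 2] ∨
      (g : Matrix (Fin 3) (Fin 3) K) = !![0, 0, 1; 1, 0, 0; 0, 1, 0]}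

/-- The ternary cubics fixed by the Heisenberg group `H₃` are exactly the span of
`x³ + y³ + z³` and `xyz` (the case `n = 3` of the paper's Proposition 6.1(i)-(ii)). -/
theorem heisenberg_invariant_cubics (K : Type*) [Field K]
    (h2 : (2 : K) ≠ 0) (h3 : (3 : K) ≠ 0)
    (ζ : K) (hζ : IsPrimitiveRoot ζ 3) :
    {F : MvPolynomial (Fin 3) K | F.IsHomogeneous 3 ∧
        ∀ g ∈ Heis3 K ζ, act ((g : Matrix.SpecialLinearGroup (Fin 3) K) :
          Matrix (Fin 3) (Fin 3) K) F = F} =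
      (Submodule.span K
        ({(X 0 : MvPolynomial (Fin 3) K) ^ 3 + X 1 ^ 3 + X 2 ^ 3,
          X 0 * X 1 * X 2} : Set (MvPolynomial (Fin 3) K)) : Set (MvPolynomial (Fin 3) K)) ∧
    LinearIndependent K
      ![(X 0 : MvPolynomial (Fin 3) K) ^ 3 + X 1 ^ 3 + X 2 ^ 3, X 0 * X 1 * X 2] := by
  have hζ3 : ζ ^ 3 = 1 := hζ.pow_eq_one
  have hC3 : (C ζ : MvPolynomial (Fin 3) K) ^ 3 = 1 := by
    rw [← map_pow, hζ3, C_1]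
  have hC6 : (C ζ : MvPolynomial (Fin 3) K) ^ 6 = 1 := by
    rw [show (6 : ℕ) = 3 * 2 from rfl, pow_mul, hC3, one_pow]
  -- coefficient formulas for the two generators
  have hcoeff1 : ∀ m : Fin 3 →₀ ℕ,
      coeff m ((X 0 : MvPolynomial (Fin 3) K) ^ 3 + X 1 ^ 3 + X 2 ^ 3)
        = (if M 3 0 0 = m then 1 else 0) + (if M 0 3 0 = m then 1 else 0)
          + (if M 0 0 3 = m then 1 else 0) := by
    intro m
    rw [coeff_add, coeff_add, coeff_X_pow, coeff_X_pow, coeff_X_pow,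
      single03, single13, single23]
  have hcoeff2 : ∀ m : Fin 3 →₀ ℕ,
      coeff m ((X 0 : MvPolynomial (Fin 3) K) * X 1 * X 2)
        = (if M 1 1 1 = m then 1 else 0) := by
    intro m
    rw [xyz_eq, coeff_monomial]
  -- homogeneity of the generators
  have hhom1 : ((X 0 : MvPolynomial (Fin 3) K) ^ 3 + X 1 ^ 3 + X 2 ^ 3).IsHomogeneous 3 :=
    ((isHomogeneous_X_pow 0 3).add (isHomogeneous_X_pow 1 3)).add (isHomogeneous_X_pow 2 3)
  have hhom2 : ((X 0 : MvPolynomial (Fin 3) K) * X 1 * X 2).IsHomogeneous 3 := by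
    simpa using ((isHomogeneous_X K 0).mul (isHomogeneous_X K 1)).mul (isHomogeneous_X K 2)
  -- determinants
  have hDdet : (!![1, 0, 0; 0, ζ, 0; 0, 0, ζ ^ 2] : Matrix (Fin 3) (Fin 3) K).det = 1 := by
    rw [Matrix.det_fin_three]
    simp
    linear_combination hζ3
  have hPdet : (!![0, 0, 1; 1, 0, 0; 0, 1, 0] : Matrix (Fin 3) (Fin 3) K).det = 1 := by
    rw [Matrix.det_fin_three]
    simp
  -- invariance of the generators under the two generating matrices
  have hsubD : (fun i => ∑ j, C ((!![1, 0, 0; 0, ζ, 0; 0, 0, ζ ^ 2] :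
        Matrix (Fin 3) (Fin 3) K) i j) * X j)
      = ![(X 0 : MvPolynomial (Fin 3) K), C ζ * X 1, C ζ ^ 2 * X 2] := by
    funext i
    fin_cases i <;> simp [Fin.sum_univ_three]
  have hsubP : (fun i => ∑ j, C ((!![0, 0, 1; 1, 0, 0; 0, 1, 0] :
        Matrix (Fin 3) (Fin 3) K) i j) * X j)
      = ![(X 2 : MvPolynomial (Fin 3) K), X 0, X 1] := by
    funext i
    fin_cases i <;> simp [Fin.sum_univ_three]
  have hactD1 : act (!![1, 0, 0; 0, ζ, 0; 0, 0, ζ ^ 2] : Matrix (Fin 3) (Fin 3) K)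
      ((X 0 : MvPolynomial (Fin 3) K) ^ 3 + X 1 ^ 3 + X 2 ^ 3)
        = (X 0 : MvPolynomial (Fin 3) K) ^ 3 + X 1 ^ 3 + X 2 ^ 3 := by
    rw [act, hsubD]
    simp only [map_add, map_pow, aeval_X, Matrix.cons_val_zero, Matrix.cons_val_one,
      Matrix.head_cons, Matrix.cons_val_two, Matrix.tail_cons]
    linear_combination (X 1 : MvPolynomial (Fin 3) K) ^ 3 * hC3
      + (X 2 : MvPolynomial (Fin 3) K) ^ 3 * hC6
  have hactD2 : act (!![1, 0, 0; 0, ζ, 0; 0, 0, ζ ^ 2] : Matrix (Fin 3) (Fin 3) K)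
      ((X 0 : MvPolynomial (Fin 3) K) * X 1 * X 2)
        = (X 0 : MvPolynomial (Fin 3) K) * X 1 * X 2 := by
    rw [act, hsubD]
    simp only [_root_.map_mul, aeval_X, Matrix.cons_val_zero, Matrix.cons_val_one,
      Matrix.head_cons, Matrix.cons_val_two, Matrix.tail_cons]
    linear_combination (X 0 : MvPolynomial (Fin 3) K) * X 1 * X 2 * hC3
  have hactP1 : act (!![0, 0, 1; 1, 0, 0; 0, 1, 0] : Matrix (Fin 3) (Fin 3) K)
      ((X 0 : MvPolynomial (Fin 3) K) ^ 3 + X 1 ^ 3 + X 2 ^ 3)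
        = (X 0 : MvPolynomial (Fin 3) K) ^ 3 + X 1 ^ 3 + X 2 ^ 3 := by
    rw [act, hsubP]
    simp only [map_add, map_pow, aeval_X, Matrix.cons_val_zero, Matrix.cons_val_one,
      Matrix.head_cons, Matrix.cons_val_two, Matrix.tail_cons]
    ring
  have hactP2 : act (!![0, 0, 1; 1, 0, 0; 0, 1, 0] : Matrix (Fin 3) (Fin 3) K)
      ((X 0 : MvPolynomial (Fin 3) K) * X 1 * X 2)
        = (X 0 : MvPolynomial (Fin 3) K) * X 1 * X 2 := by
    rw [act, hsubP]
    simp only [_root_.map_mul, aeval_X, Matrix.cons_val_zero, Matrix.cons_val_one,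
      Matrix.head_cons, Matrix.cons_val_two, Matrix.tail_cons]
    ring
  -- invariance of the generators under all of Heis3
  have hgen : ∀ g ∈ Heis3 K ζ,
      act ((g : Matrix.SpecialLinearGroup (Fin 3) K) : Matrix (Fin 3) (Fin 3) K)
        ((X 0 : MvPolynomial (Fin 3) K) ^ 3 + X 1 ^ 3 + X 2 ^ 3)
          = (X 0 : MvPolynomial (Fin 3) K) ^ 3 + X 1 ^ 3 + X 2 ^ 3 ∧
      act ((g : Matrix.SpecialLinearGroup (Fin 3) K) : Matrix (Fin 3) (Fin 3) K)
        ((X 0 : MvPolynomial (Fin 3) K) * X 1 * X 2)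
          = (X 0 : MvPolynomial (Fin 3) K) * X 1 * X 2 := by
    intro g hg
    induction hg using Subgroup.closure_induction with
    | mem x hx =>
      rcases hx with hx | hx
      · rw [hx]; exact ⟨hactD1, hactD2⟩
      · rw [hx]; exact ⟨hactP1, hactP2⟩
    | one =>
      rw [Matrix.SpecialLinearGroup.coe_one]
      exact ⟨act_one _, act_one _⟩
    | mul x y hx hy ihx ihy =>
      refine ⟨?_, ?_⟩
      · rw [Matrix.SpecialLinearGroup.coe_mul, ← act_act, ihx.1, ihy.1]
      · rw [Matrix.SpecialLinearGroup.coe_mul, ← act_act, ihx.2, ihy.2]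
    | inv x hx ih =>
      constructor
      · rw [← ih.1, act_act, ← Matrix.SpecialLinearGroup.coe_mul, mul_inv_cancel,
          Matrix.SpecialLinearGroup.coe_one, act_one, ih.1]
      · rw [← ih.2, act_act, ← Matrix.SpecialLinearGroup.coe_mul, mul_inv_cancel,
          Matrix.SpecialLinearGroup.coe_one, act_one, ih.2]
  constructor
  · apply Set.Subset.antisymm
    · -- hard direction
      rintro F ⟨hhom, hinv⟩
      have hD : act (!![1, 0, 0; 0, ζ, 0; 0, 0, ζ ^ 2] : Matrix (Fin 3) (Fin 3) K) F = F :=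
        hinv ⟨_, hDdet⟩ (Subgroup.subset_closure (Or.inl rfl))
      have hP : act (!![0, 0, 1; 1, 0, 0; 0, 1, 0] : Matrix (Fin 3) (Fin 3) K) F = F :=
        hinv ⟨_, hPdet⟩ (Subgroup.subset_closure (Or.inr rfl))
      -- consequences of D-invariance
      have hsD : (fun i => ∑ j, C ((!![1, 0, 0; 0, ζ, 0; 0, 0, ζ ^ 2] :
            Matrix (Fin 3) (Fin 3) K) i j) * X j)
          = fun i => C ((![1, ζ, ζ ^ 2] : Fin 3 → K) i) * (X i : MvPolynomial (Fin 3) K) := by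
        funext i
        fin_cases i <;> simp [Fin.sum_univ_three]
      have hzero : ∀ p q r : ℕ, ¬ (3 ∣ q + 2 * r) → coeff (M p q r) F = 0 := by
        intro p q r hdvd
        have h := coeff_scale (![1, ζ, ζ ^ 2] : Fin 3 → K) F (M p q r)
        rw [← hsD] at h
        simp only [act] at hD
        rw [hD] at h
        have hprod : (∏ i, (![1, ζ, ζ ^ 2] : Fin 3 → K) i ^ (M p q r) i)
            = ζ ^ (q + 2 * r) := by
          rw [Fin.prod_univ_three, M_apply0, M_apply1, M_apply2]
          simp [pow_add, ← pow_mul]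
        rw [hprod] at h
        by_contra hne
        apply hdvd
        apply (hζ.pow_eq_one_iff_dvd _).mp
        have h' : ζ ^ (q + 2 * r) * coeff (M p q r) F = 1 * coeff (M p q r) F := by
          rw [one_mul]; exact h.symm
        exact mul_right_cancel₀ hne h'
      -- consequences of P-invariance
      have hren : ∀ p q r : ℕ, coeff (M q r p) F = coeff (M p q r) F := by
        intro p q r
        have hτ : Function.Injective (![2, 0, 1] : Fin 3 → Fin 3) := by decide
        have hs : (fun i => ∑ j, C ((!![0, 0, 1; 1, 0, 0; 0, 1, 0] :
              Matrix (Fin 3) (Fin 3) K) i j) * X j)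
            = fun i => (X ((![2, 0, 1] : Fin 3 → Fin 3) i) : MvPolynomial (Fin 3) K) := by
          funext i
          fin_cases i <;> simp [Fin.sum_univ_three]
        have hPF : rename (![2, 0, 1] : Fin 3 → Fin 3) F = F := by
          have : rename (![2, 0, 1] : Fin 3 → Fin 3) F
              = aeval (fun i => (X ((![2, 0, 1] : Fin 3 → Fin 3) i) : MvPolynomial (Fin 3) K)) F := by
            rw [rename_eq_aeval]; rfl
          rw [this, ← hs]
          simpa only [act] using hP
        have h := coeff_rename_mapDomain (![2, 0, 1] : Fin 3 → Fin 3) hτ F (M p q r)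
        rw [hPF, mapDomain_M] at h
        exact h
      rw [SetLike.mem_coe, Submodule.mem_span_pair]
      refine ⟨coeff (M 3 0 0) F, coeff (M 1 1 1) F, ?_⟩
      apply MvPolynomial.ext
      intro m
      obtain ⟨p, q, r, rfl⟩ : ∃ p q r, m = M p q r := ⟨_, _, _, eq_M m⟩
      rw [coeff_add, coeff_smul, coeff_smul, smul_eq_mul, smul_eq_mul, hcoeff1, hcoeff2]
      simp only [M_eq_iff]
      by_cases hs3 : p + q + r = 3
      · have hp : p ≤ 3 := by omega
        have hq : q ≤ 3 := by omega
        have hr : r ≤ 3 := by omega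
        interval_cases p <;> interval_cases q <;> interval_cases r <;> norm_num <;>
          first
            | (exfalso; omega)
            | exact (hren 3 0 0).symm
            | exact ((hren 0 0 3).trans (hren 3 0 0)).symm
            | exact (hzero _ _ _ (by decide)).symm
      · have c1 : ¬(3 = p ∧ 0 = q ∧ 0 = r) := by omega
        have c2 : ¬(0 = p ∧ 3 = q ∧ 0 = r) := by omega
        have c3 : ¬(0 = p ∧ 0 = q ∧ 3 = r) := by omega
        have c4 : ¬(1 = p ∧ 1 = q ∧ 1 = r) := by omega
        have hcz : coeff (M p q r) F = 0 :=
          hhom.coeff_eq_zero (by rw [degree3, M_apply0, M_apply1, M_apply2]; exact hs3)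
        rw [if_neg c1, if_neg c2, if_neg c3, if_neg c4, hcz]
        ring
    · -- easy direction
      intro x hx
      rw [SetLike.mem_coe, Submodule.mem_span_pair] at hx
      obtain ⟨c, d, rfl⟩ := hx
      constructor
      · apply MvPolynomial.IsHomogeneous.add
        · rw [smul_eq_C_mul]; exact hhom1.C_mul c
        · rw [smul_eq_C_mul]; exact hhom2.C_mul d
      · intro g hg
        have h := hgen g hg
        rw [show act ((g : Matrix.SpecialLinearGroup (Fin 3) K) : Matrix (Fin 3) (Fin 3) K)
            (c • ((X 0 : MvPolynomial (Fin 3) K) ^ 3 + X 1 ^ 3 + X 2 ^ 3)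
              + d • ((X 0 : MvPolynomial (Fin 3) K) * X 1 * X 2))
          = c • act ((g : Matrix.SpecialLinearGroup (Fin 3) K) : Matrix (Fin 3) (Fin 3) K)
              ((X 0 : MvPolynomial (Fin 3) K) ^ 3 + X 1 ^ 3 + X 2 ^ 3)
            + d • act ((g : Matrix.SpecialLinearGroup (Fin 3) K) : Matrix (Fin 3) (Fin 3) K)
              ((X 0 : MvPolynomial (Fin 3) K) * X 1 * X 2) from by
            simp only [act, map_add, _root_.map_smul]]
        rw [h.1, h.2]
  · rw [LinearIndependent.pair_iff]
    intro s t hst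
    have h1 := congrArg (coeff (M 3 0 0)) hst
    have h2 := congrArg (coeff (M 1 1 1)) hst
    rw [coeff_add, coeff_smul, coeff_smul, hcoeff1, hcoeff2, coeff_zero] at h1 h2
    simp only [M_eq_iff, smul_eq_mul] at h1 h2
    norm_num at h1 h2
    exact ⟨h1, h2⟩

end
end
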